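/- Let Γ be a reduced marked graph of groups obtained from Γ'' by collapsing a single geometric edge e with label =, where Γ'' lies in a deformation space D. Then every collapsible edge of Γ'' (other than e) is incident to o(e), and every such edge f with o(f) = o(e) is of one of three types: (1) t(f) ≠ t(e); (2) t(f) = t(e) and f̄ has label ≠; (3) t(f) = t(e) and f̄ has label =. Moreover, collapsing a type 2 edge of Γ'' always yields a reduced marked graph. -/

import Mathlib

/-- A graph in the sense of Serre: oriented edges with a fixed-point-free
reversal involution. -/
structure SGraph where
  V : Type
  E : Type
  o : E → V
  t : E → V
  bar : E → E
  bar_bar : ∀ e, bar (bar e) = e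
  bar_ne : ∀ e, bar e ≠ e
  o_bar : ∀ e, o (bar e) = t e

namespace SGraph

/-- Edge paths in a graph. -/
inductive Walk (Γ : SGraph) : Γ.V → Γ.V → Type
  | nil (v : Γ.V) : Walk Γ v v
  | cons (e : Γ.E) {w : Γ.V} (p : Walk Γ (Γ.t e) w) : Walk Γ (Γ.o e) w

/-- The list of edges traversed by a walk. -/
def Walk.edges {Γ : SGraph} : {v w : Γ.V} → Γ.Walk v w → List Γ.E
  | _, _, .nil _ => []
  | _, _, .cons e p => e :: p.edges

/-- The vertices visited by a walk. -/
def Walk.support {Γ : SGraph} : {v w : Γ.V} → Γ.Walk v w → List Γ.V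
  | v, _, .nil _ => [v]
  | _, _, .cons e p => Γ.o e :: p.support

/-- A walk is reduced if it never backtracks. -/
def Walk.Reduced {Γ : SGraph} {v w : Γ.V} (p : Γ.Walk v w) : Prop :=
  p.edges.Chain' (fun e f => f ≠ Γ.bar e)

/-- A (simplicial) tree: any two vertices are joined by a unique reduced
edge path. -/
def IsTreeG (Γ : SGraph) : Prop :=
  (∀ v w : Γ.V, Nonempty (Γ.Walk v w)) ∧
  ∀ v w : Γ.V, ∀ p q : Γ.Walk v w, p.Reduced → q.Reduced → p = q

end SGraph

/-- A `G`-tree: a simplicial tree with a `G`-action by simplicial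
automorphisms, without inversions. -/
structure GTree (G : Type) [Group G] extends SGraph where
  aV : G → V → V
  aE : G → E → E
  aV_one : ∀ v, aV 1 v = v
  aV_mul : ∀ g h v, aV (g * h) v = aV g (aV h v)
  aE_one : ∀ e, aE 1 e = e
  aE_mul : ∀ g h e, aE (g * h) e = aE g (aE h e)
  a_o : ∀ g e, o (aE g e) = aV g (o e)
  a_t : ∀ g e, t (aE g e) = aV g (t e)
  a_bar : ∀ g e, bar (aE g e) = aE g (bar e)
  no_inversions : ∀ g e, aE g e ≠ bar e
  tree : toSGraph.IsTreeG

namespace GTree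

variable {G : Type} [Group G]

/-- The (setwise pointwise) stabilizer of a vertex. -/
def stabV (T : GTree G) (v : T.V) : Set G := {g | T.aV g v = v}

/-- The stabilizer of an edge. -/
def stabE (T : GTree G) (e : T.E) : Set G := {g | T.aE g e = e}

/-- A subgroup is elliptic if it fixes a vertex. -/
def Elliptic (T : GTree G) (H : Subgroup G) : Prop :=
  ∃ v : T.V, ∀ h ∈ H, T.aV h v = v

/-- Two `G`-trees with the same elliptic subgroups. -/
def SameElliptics (T T' : GTree G) : Prop :=
  ∀ H : Subgroup G, T.Elliptic H ↔ T'.Elliptic H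

/-- The orbit of an oriented edge. -/
def ordOrbit (T : GTree G) (e : T.E) : Set T.E := {f | ∃ g, f = T.aE g e}

/-- The orbit of the geometric edge `{e, ē}`. -/
def geomOrbit (T : GTree G) (e : T.E) : Set T.E :=
  {f | ∃ g, f = T.aE g e ∨ f = T.aE g (T.bar e)}

/-- The label of an oriented edge is `=` when the edge-to-initial-vertex
inclusion `G_e → G_{o(e)}` is surjective, i.e. `G_{o(e)} ⊆ G_e`. -/
def lab (T : GTree G) (e : T.E) : Prop := T.stabV (T.o e) ⊆ T.stabE e

/-- A collapsible edge: `G_e = G_{o(e)}` and the endpoints lie in different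
`G`-orbits. -/
def CollapsibleEdge (T : GTree G) (e : T.E) : Prop :=
  T.stabV (T.o e) ⊆ T.stabE e ∧ ∀ g : G, T.aV g (T.o e) ≠ T.t e

/-- A reduced `G`-tree admits no collapse move. -/
def Reduced (T : GTree G) : Prop := ∀ e : T.E, ¬ T.CollapsibleEdge e

/-- The data of an (equivariant) collapse of the invariant edge set `S` of `T`,
producing the `G`-tree `T'`. -/
structure CollapseOnto (T T' : GTree G) (S : Set T.E) where
  inv_bar : ∀ e ∈ S, T.bar e ∈ S
  inv_act : ∀ (g : G), ∀ e ∈ S, T.aE g e ∈ S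
  φV : T.V → T'.V
  φE : T.E → Option T'.E
  equivV : ∀ g v, φV (T.aV g v) = T'.aV g (φV v)
  equivE : ∀ g e, φE (T.aE g e) = (φE e).map (T'.aE g)
  collapsed : ∀ e, φE e = none ↔ e ∈ S
  map_o : ∀ e e', φE e = some e' → T'.o e' = φV (T.o e)
  map_t : ∀ e e', φE e = some e' → T'.t e' = φV (T.t e)
  map_bar : ∀ e e', φE e = some e' → φE (T.bar e) = some (T'.bar e')
  surjV : Function.Surjective φV
  injE : ∀ e₁ e₂ e', φE e₁ = some e' → φE e₂ = some e' → e₁ = e₂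
  surjE : ∀ e', ∃ e, φE e = some e'
  identify : ∀ v w : T.V, φV v = φV w ↔
    ∃ p : T.toSGraph.Walk v w, ∀ x ∈ p.edges, x ∈ S

/-- A collapse move: equivariantly collapsing the orbit of a collapsible
edge. -/
def IsCollapse (T T' : GTree G) (e : T.E) : Prop :=
  T.CollapsibleEdge e ∧ Nonempty (CollapseOnto T T' (T.geomOrbit e))

/-- Iterated collapse of two edge orbits. -/
def IsCollapse₂ (T T' : GTree G) (e f : T.E) : Prop :=
  T.CollapsibleEdge e ∧ ∃ (T₁ : GTree G) (c : CollapseOnto T T₁ (T.geomOrbit e))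
    (f₁ : T₁.E), c.φE f = some f₁ ∧ IsCollapse T₁ T' f₁

/-- One collapse move. -/
def DefStep (T T' : GTree G) : Prop := ∃ e : T.E, IsCollapse T T' e

/-- Elementary deformations: finite sequences of collapse and expansion
moves. -/
def Deformation : GTree G → GTree G → Prop :=
  Relation.ReflTransGen (fun T T' => DefStep T T' ∨ DefStep T' T)

/-- Equivariant isomorphism of `G`-trees. -/
def EquivIso (T T' : GTree G) : Prop :=
  ∃ (ψV : T.V → T'.V) (ψE : T.E → T'.E),
    Function.Bijective ψV ∧ Function.Bijective ψE ∧
    (∀ g v, ψV (T.aV g v) = T'.aV g (ψV v)) ∧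
    (∀ g x, ψE (T.aE g x) = T'.aE g (ψE x)) ∧
    (∀ x, ψE (T.bar x) = T'.bar (ψE x)) ∧
    (∀ x, T'.o (ψE x) = ψV (T.o x)) ∧ (∀ x, T'.t (ψE x) = ψV (T.t x))

/-- Cocompactness: finitely many edge orbits. -/
def Cocompact (T : GTree G) : Prop :=
  ∃ l : List T.E, ∀ e : T.E, ∃ g : G, ∃ f ∈ l, e = T.aE g f

/-- Data of a slide move: the orbit of `e` is slid over (the orbit of) `f`. -/
structure SlideData (T T' : GTree G) (e f : T.E) where
  h_o : T.o e = T.o f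
  hstab : T.stabE e ⊆ T.stabE f
  hne : e ∉ T.geomOrbit f
  ψV : T.V → T'.V
  ψE : T.E → T'.E
  bijV : Function.Bijective ψV
  bijE : Function.Bijective ψE
  equivV : ∀ g v, ψV (T.aV g v) = T'.aV g (ψV v)
  equivE : ∀ g x, ψE (T.aE g x) = T'.aE g (ψE x)
  ψbar : ∀ x, ψE (T.bar x) = T'.bar (ψE x)
  untouched : ∀ x, x ∉ T.ordOrbit e → x ∉ T.ordOrbit (T.bar e) →
    T'.o (ψE x) = ψV (T.o x) ∧ T'.t (ψE x) = ψV (T.t x)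
  slid : ∀ g : G, T'.o (ψE (T.aE g e)) = ψV (T.aV g (T.t f)) ∧
    T'.t (ψE (T.aE g e)) = ψV (T.aV g (T.t e))

/-- A slide move of (the orbit of) some edge over the edge `f`. -/
def SlideMoveOver (T T' : GTree G) (f : T.E) : Prop :=
  ∃ e : T.E, Nonempty (SlideData T T' e f)

/-- A slide move. -/
def SlideMove (T T' : GTree G) : Prop := ∃ f : T.E, SlideMoveOver T T' f

/-- An induction move: an expansion and collapse along an ascending loop.
In the common expansion `T''`, the edges `e` and `f` form the subdivided
loop; collapsing `e` gives the tree `T` with ascending loop and vertex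
group `A`, collapsing `f` gives the tree `T'` with vertex group `B`. -/
def InductionMove (T T' : GTree G) : Prop :=
  ∃ (T'' : GTree G) (e f : T''.E), e ∉ T''.geomOrbit f ∧
    T''.o f = T''.t e ∧ (∃ s : G, T''.t f = T''.aV s (T''.o e)) ∧
    IsCollapse T'' T e ∧ IsCollapse T'' T' f

/-- An `A⁻¹`-move: an induction move followed by a collapse, removing a
strict ascending loop. `d` is the edge joining the loop vertex to the
vertex with group `C`, `ℓ` is the loop edge; `B` is proper in `C` and in
`A`, and no other edges are incident to the loop. -/
def AInvMove (T T' : GTree G) : Prop :=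
  ∃ T₁ : GTree G, InductionMove T T₁ ∧
  ∃ d : T₁.E, IsCollapse T₁ T' d ∧
    ¬ (T₁.stabV (T₁.t d) ⊆ T₁.stabE d) ∧
    ∃ ℓ : T₁.E, T₁.o ℓ = T₁.o d ∧ (∃ s : G, T₁.t ℓ = T₁.aV s (T₁.o ℓ)) ∧
      T₁.stabV (T₁.o ℓ) ⊆ T₁.stabE ℓ ∧ ¬ (T₁.stabV (T₁.t ℓ) ⊆ T₁.stabE ℓ) ∧
      ∀ x : T₁.E, T₁.o x = T₁.o d → x ∈ T₁.geomOrbit ℓ ∨ x ∈ T₁.geomOrbit d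

/-- An `A`-move is the reverse of an `A⁻¹`-move. -/
def AMove (T T' : GTree G) : Prop := AInvMove T' T

/-- A strict ascending loop in the quotient graph of groups: an edge whose
endpoints are in the same orbit, with `G_{o(ℓ)} = G_ℓ` but `G_ℓ` properly
contained in `G_{t(ℓ)}`. -/
def HasStrictAscLoop (T : GTree G) : Prop :=
  ∃ (ℓ : T.E) (s : G), T.t ℓ = T.aV s (T.o ℓ) ∧
    T.stabV (T.o ℓ) ⊆ T.stabE ℓ ∧ ¬ (T.stabV (T.t ℓ) ⊆ T.stabE ℓ)

/-- Type I Whitehead move between reduced trees. -/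
def WhiteheadI (T T' : GTree G) : Prop :=
  T.Reduced ∧ T'.Reduced ∧ ∃ (T'' : GTree G) (e e' : T''.E),
    e' ∉ T''.geomOrbit e ∧ IsCollapse T'' T e ∧ IsCollapse T'' T' e'

/-- Type II Whitehead move between reduced trees. -/
def WhiteheadII (T T' : GTree G) : Prop :=
  T.Reduced ∧ T'.Reduced ∧ ∃ (T'' : GTree G) (e e' f' : T''.E),
    e' ∉ T''.geomOrbit e ∧ f' ∉ T''.geomOrbit e ∧ f' ∉ T''.geomOrbit e' ∧
    IsCollapse T'' T e ∧ IsCollapse₂ T'' T' e' f'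

end GTree

namespace GTree
variable {G : Type} [Group G]

/-- Type 1 collapsible edge at `o(e)`: its terminal vertex is not in the
orbit of `t(e)` (which forces `ē` to have label `≠`). -/
def TypeOne (T : GTree G) (e f : T.E) : Prop :=
  T.CollapsibleEdge f ∧ T.o f = T.o e ∧ ∀ g : G, T.aV g (T.t e) ≠ T.t f

/-- Type 2: terminal vertex in the orbit of `t(e)` and `f̄` has label `≠`. -/
def TypeTwo (T : GTree G) (e f : T.E) : Prop :=
  T.CollapsibleEdge f ∧ T.o f = T.o e ∧ (∃ g : G, T.aV g (T.t e) = T.t f) ∧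
    ¬ T.lab (T.bar f)

/-- Type 3: terminal vertex in the orbit of `t(e)` and `f̄` has label `=`. -/
def TypeThree (T : GTree G) (e f : T.E) : Prop :=
  T.CollapsibleEdge f ∧ T.o f = T.o e ∧ (∃ g : G, T.aV g (T.t e) = T.t f) ∧
    T.lab (T.bar f)

end GTree
/-!
Since `G_{o(e)} = G_e`, the orbit of `e` meets each translate `g·o(e)` in the single edge
`g·e`, so collapsing it merges every `g·o(e)` into `g·t(e)` and identifies no other pair of
vertices. Hence a collapsible edge of `T''` away from the orbit of `o(e)` would stay
collapsible in the reduced tree `T`. For a type 2 edge `f`, collapsing `f` identifies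
`o(e) = o(f)` with `t(f)`, a translate of `t(e)`; so whatever the collapse of `e` identifies
becomes equal up to the action after collapsing `f`. An edge `x` that became collapsible
after collapsing `f` would therefore already be collapsible after collapsing `e`, unless
`o(x)` lies in the orbit of `o(f)`; in that case `G_{t(f)}` fixes the image of `o(f)`, so
`G_{t(f)} ⊆ G_f`, i.e. `f̄` would have label `=`.
-/

namespace SGraph

theorem Walk.rel_of_forall_mem {Γ : SGraph} {S : Set Γ.E} {r : Γ.V → Γ.V → Prop}
    (hr : Equivalence r) (hS : ∀ x ∈ S, r (Γ.o x) (Γ.t x)) :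
    ∀ {v w : Γ.V} (p : Γ.Walk v w), (∀ x ∈ p.edges, x ∈ S) → r v w
  | _, _, .nil _, _ => hr.refl _
  | _, _, .cons x p, hp =>
    hr.trans (hS x (hp x List.mem_cons_self))
      (p.rel_of_forall_mem hr hS fun y hy => hp y (List.mem_cons_of_mem _ hy))

end SGraph

namespace GTree

variable {G : Type} [Group G]

section Action

variable (T : GTree G)

@[simp]
theorem aV_inv_aV (g : G) (v : T.V) : T.aV g⁻¹ (T.aV g v) = v := by
  rw [← T.aV_mul, inv_mul_cancel, T.aV_one]

@[simp]
theorem aV_aV_inv (g : G) (v : T.V) : T.aV g (T.aV g⁻¹ v) = v := by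
  rw [← T.aV_mul, mul_inv_cancel, T.aV_one]

@[simp]
theorem aV_inj (g : G) {v w : T.V} : T.aV g v = T.aV g w ↔ v = w :=
  ⟨fun h => by simpa using congrArg (T.aV g⁻¹) h, congrArg _⟩

theorem t_bar (e : T.E) : T.t (T.bar e) = T.o e := by
  rw [← T.o_bar, T.bar_bar]

theorem self_mem_geomOrbit (e : T.E) : e ∈ T.geomOrbit e :=
  ⟨1, Or.inl (T.aE_one e).symm⟩

theorem aV_t_eq_of_aV_o_eq {e : T.E} (he : T.lab e) {g k : G}
    (h : T.aV g (T.o e) = T.aV k (T.o e)) : T.aV g (T.t e) = T.aV k (T.t e) := by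
  have hfix : T.aE (k⁻¹ * g) e = e :=
    he (show T.aV (k⁻¹ * g) (T.o e) = T.o e by rw [T.aV_mul, h, aV_inv_aV])
  have ht := congrArg T.t hfix
  rw [T.a_t, T.aV_mul] at ht
  simpa using congrArg (T.aV k) ht

end Action

def SameOrbit (T : GTree G) (v w : T.V) : Prop := ∃ g : G, T.aV g v = w

section SameOrbit

variable {T : GTree G}

theorem sameOrbit_equivalence : Equivalence T.SameOrbit where
  refl v := ⟨1, T.aV_one v⟩
  symm := fun ⟨g, hg⟩ => ⟨g⁻¹, by rw [← hg, aV_inv_aV]⟩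
  trans := fun ⟨g, hg⟩ ⟨k, hk⟩ => ⟨k * g, by rw [T.aV_mul, hg, hk]⟩

@[simp]
theorem sameOrbit_aV_left_iff {g : G} {v w : T.V} :
    T.SameOrbit (T.aV g v) w ↔ T.SameOrbit v w :=
  ⟨fun ⟨k, hk⟩ => ⟨k * g, by rw [T.aV_mul, hk]⟩,
    fun ⟨k, hk⟩ => ⟨k * g⁻¹, by rw [T.aV_mul, aV_inv_aV, hk]⟩⟩

@[simp]
theorem sameOrbit_aV_right_iff {g : G} {v w : T.V} :
    T.SameOrbit v (T.aV g w) ↔ T.SameOrbit v w :=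
  ⟨fun ⟨k, hk⟩ => ⟨g⁻¹ * k, by rw [T.aV_mul, hk, aV_inv_aV]⟩,
    fun ⟨k, hk⟩ => ⟨g * k, by rw [T.aV_mul, hk]⟩⟩

theorem sameOrbit_map_of_mem_geomOrbit {T' : GTree G} {F : T.V → T'.V}
    (hF : ∀ g v, F (T.aV g v) = T'.aV g (F v)) {e x : T.E}
    (he : T'.SameOrbit (F (T.o e)) (F (T.t e))) (hx : x ∈ T.geomOrbit e) :
    T'.SameOrbit (F (T.o x)) (F (T.t x)) := by
  obtain ⟨g, rfl | rfl⟩ := hx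
  · simpa [T.a_o, T.a_t, hF] using he
  · simpa [T.a_o, T.a_t, T.o_bar, t_bar, hF] using sameOrbit_equivalence.symm he

end SameOrbit

section StarCenter

variable (T : GTree G)

/-- When `G_{o(e)} = G_e`, collapsing the orbit of `e` merges each translate `g·o(e)` into
`g·t(e)`; `T.starCenter e v` is the vertex into which `v` is merged. -/
noncomputable def starCenter (e : T.E) (v : T.V) : T.V :=
  open Classical in
  if h : T.SameOrbit (T.o e) v then T.aV h.choose (T.t e) else v

variable {T}

theorem starCenter_aV_o {e : T.E} (he : T.lab e) (g : G) :
    T.starCenter e (T.aV g (T.o e)) = T.aV g (T.t e) := by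
  have h : T.SameOrbit (T.o e) (T.aV g (T.o e)) := ⟨g, rfl⟩
  rw [starCenter, dif_pos h]
  exact T.aV_t_eq_of_aV_o_eq he h.choose_spec

theorem starCenter_of_not_sameOrbit {e : T.E} {v : T.V} (hv : ¬ T.SameOrbit (T.o e) v) :
    T.starCenter e v = v :=
  dif_neg hv

theorem starCenter_o_eq_t {e x : T.E} (he : T.CollapsibleEdge e) (hx : x ∈ T.geomOrbit e) :
    T.starCenter e (T.o x) = T.starCenter e (T.t x) := by
  have hct (g : G) : T.starCenter e (T.aV g (T.t e)) = T.aV g (T.t e) :=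
    starCenter_of_not_sameOrbit (sameOrbit_aV_right_iff.not.2 fun ⟨k, hk⟩ => he.2 k hk)
  obtain ⟨g, rfl | rfl⟩ := hx
  · rw [T.a_o, T.a_t, starCenter_aV_o he.1, hct]
  · rw [T.a_o, T.a_t, T.o_bar, t_bar, starCenter_aV_o he.1, hct]

end StarCenter

namespace CollapseOnto

variable {T T' : GTree G} {S : Set T.E} (c : CollapseOnto T T' S)

theorem rel_of_φV_eq {r : T.V → T.V → Prop} (hr : Equivalence r)
    (hS : ∀ x ∈ S, r (T.o x) (T.t x)) {v w : T.V} (h : c.φV v = c.φV w) : r v w := by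
  obtain ⟨p, hp⟩ := (c.identify v w).1 h
  exact p.rel_of_forall_mem hr hS hp

theorem φV_o_eq_t {x : T.E} (hx : x ∈ S) : c.φV (T.o x) = c.φV (T.t x) :=
  (c.identify _ _).2 ⟨.cons x (.nil _), by simpa [SGraph.Walk.edges] using hx⟩

theorem exists_φE_eq_some {x : T.E} (hx : x ∉ S) : ∃ x', c.φE x = some x' :=
  Option.ne_none_iff_exists'.1 fun h => hx ((c.collapsed x).1 h)

theorem aE_eq_self_iff {x : T.E} {x' : T'.E} (hx : c.φE x = some x') (g : G) :
    T'.aE g x' = x' ↔ T.aE g x = x := by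
  have hg : c.φE (T.aE g x) = some (T'.aE g x') := by rw [c.equivE, hx, Option.map_some]
  refine ⟨fun h => c.injE _ _ x' (h ▸ hg) hx, fun h => ?_⟩
  rw [h, hx] at hg
  exact (Option.some.inj hg).symm

theorem collapsibleEdge_iff {x : T.E} {x' : T'.E} (hx : c.φE x = some x') :
    T'.CollapsibleEdge x' ↔
      (∀ g, c.φV (T.aV g (T.o x)) = c.φV (T.o x) → T.aE g x = x) ∧
        ∀ g, c.φV (T.aV g (T.o x)) ≠ c.φV (T.t x) := by
  simp only [CollapsibleEdge, stabV, stabE, Set.subset_def, Set.mem_ofPred_eq,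
    c.map_o x x' hx, c.map_t x x' hx, ← c.equivV, c.aE_eq_self_iff hx]

theorem lab_of_collapsibleEdge {x : T.E} {x' : T'.E} (hx : c.φE x = some x')
    (hx' : T'.CollapsibleEdge x') : T.lab x :=
  fun g hg => ((c.collapsibleEdge_iff hx).1 hx').1 g (congrArg c.φV hg)

theorem lab_bar_of_collapsibleEdge {f x : T.E} {x' : T'.E} (hfS : f ∈ S) (hf : T.lab f)
    (hx : c.φE x = some x') (hx' : T'.CollapsibleEdge x')
    (hox : T.SameOrbit (T.o f) (T.o x)) : T.lab (T.bar f) := by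
  obtain ⟨k, hk⟩ := hox
  intro s hs
  replace hs : T.aV s (T.t f) = T.t f := by rwa [← T.o_bar]
  have hfix : c.φV (T.aV (k * s * k⁻¹) (T.o x)) = c.φV (T.o x) := by
    rw [← hk, ← T.aV_mul, inv_mul_cancel_right, T.aV_mul]
    simp only [c.equivV]
    rw [c.φV_o_eq_t hfS, ← c.equivV s, hs]
  have hsx := congrArg T.o (((c.collapsibleEdge_iff hx).1 hx').1 _ hfix)
  rw [T.a_o, ← hk] at hsx
  simp only [T.aV_mul, aV_inv_aV, aV_inj] at hsx
  show T.aE s (T.bar f) = T.bar f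
  rw [← T.a_bar, show T.aE s f = f from hf hsx]

end CollapseOnto

section CollapseOfEdge

variable {T T' : GTree G} {e : T.E}

theorem CollapseOnto.starCenter_eq_of_φV_eq (he : T.CollapsibleEdge e)
    (c : CollapseOnto T T' (T.geomOrbit e)) {v w : T.V} (h : c.φV v = c.φV w) :
    T.starCenter e v = T.starCenter e w :=
  c.rel_of_φV_eq (r := fun v w => T.starCenter e v = T.starCenter e w)
    ⟨fun _ => rfl, Eq.symm, Eq.trans⟩ (fun _ hx => starCenter_o_eq_t he hx) h

theorem CollapseOnto.eq_of_φV_eq (he : T.CollapsibleEdge e)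
    (c : CollapseOnto T T' (T.geomOrbit e)) {v w : T.V} (hv : ¬ T.SameOrbit (T.o e) v)
    (hw : ¬ T.SameOrbit (T.o e) w) (h : c.φV v = c.φV w) : v = w := by
  simpa [starCenter_of_not_sameOrbit hv, starCenter_of_not_sameOrbit hw] using
    c.starCenter_eq_of_φV_eq he h

theorem CollapseOnto.collapsibleEdge_of_forall_φV_ne (he : T.CollapsibleEdge e)
    (c : CollapseOnto T T' (T.geomOrbit e)) {x : T.E} {x' : T'.E} (hx : c.φE x = some x')
    (hlab : T.lab x) (ho : ¬ T.SameOrbit (T.o e) (T.o x))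
    (ht : ∀ g, c.φV (T.aV g (T.o x)) ≠ c.φV (T.t x)) : T'.CollapsibleEdge x' :=
  (c.collapsibleEdge_iff hx).2
    ⟨fun _ hg => hlab (c.eq_of_φV_eq he (sameOrbit_aV_right_iff.not.2 ho) ho hg), ht⟩

theorem IsCollapse.exists_sameOrbit_of_collapsibleEdge (hc : IsCollapse T T' e)
    (hred : T'.Reduced) {f : T.E} (hf : T.CollapsibleEdge f) (hfe : f ∉ T.geomOrbit e) :
    ∃ g : G, T.aV g (T.o e) = T.o f ∨ T.aV g (T.o e) = T.t f := by
  obtain ⟨he, ⟨c⟩⟩ := hc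
  by_contra! h
  have ho : ¬ T.SameOrbit (T.o e) (T.o f) := by rintro ⟨g, hg⟩; exact (h g).1 hg
  have ht : ¬ T.SameOrbit (T.o e) (T.t f) := by rintro ⟨g, hg⟩; exact (h g).2 hg
  obtain ⟨f', hf'⟩ := c.exists_φE_eq_some hfe
  refine hred f' (c.collapsibleEdge_of_forall_φV_ne he hf' hf.1 ho fun g hg => hf.2 g ?_)
  exact c.eq_of_φV_eq he (sameOrbit_aV_right_iff.not.2 ho) ht hg

theorem IsCollapse.reduced_of_isCollapse_typeTwo (hc : IsCollapse T T' e)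
    (hred : T'.Reduced) {f : T.E} (hf : T.TypeTwo e f)
    {T₃ : GTree G} (hc₃ : IsCollapse T T₃ f) : T₃.Reduced := by
  obtain ⟨he, ⟨c⟩⟩ := hc
  obtain ⟨-, ⟨c₃⟩⟩ := hc₃
  obtain ⟨hfc, hof, ⟨g₀, hg₀⟩, hnlab⟩ := hf
  have hcore : T₃.SameOrbit (c₃.φV (T.o e)) (c₃.φV (T.t e)) :=
    sameOrbit_equivalence.symm
      ⟨g₀, by rw [← c₃.equivV, hg₀, ← c₃.φV_o_eq_t (T.self_mem_geomOrbit f), hof]⟩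
  have hrel {v w : T.V} (h : c.φV v = c.φV w) : T₃.SameOrbit (c₃.φV v) (c₃.φV w) :=
    c.rel_of_φV_eq (sameOrbit_equivalence.comap c₃.φV)
      (fun _ hx => sameOrbit_map_of_mem_geomOrbit c₃.equivV hcore hx) h
  intro x' hx'
  obtain ⟨x, hx⟩ := c₃.surjE x'
  have hsep : ¬ T₃.SameOrbit (c₃.φV (T.o x)) (c₃.φV (T.t x)) := by
    rintro ⟨g, hg⟩
    exact ((c₃.collapsibleEdge_iff hx).1 hx').2 g (by rw [c₃.equivV, hg])
  by_cases hxe : x ∈ T.geomOrbit e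
  · exact hsep (hrel (c.φV_o_eq_t hxe))
  by_cases hox : T.SameOrbit (T.o e) (T.o x)
  · exact hnlab (c₃.lab_bar_of_collapsibleEdge (T.self_mem_geomOrbit f) hfc.1 hx hx'
      (hof ▸ hox))
  obtain ⟨x₁, hx₁⟩ := c.exists_φE_eq_some hxe
  refine hred x₁ (c.collapsibleEdge_of_forall_φV_ne he hx₁
    (c₃.lab_of_collapsibleEdge hx hx') hox fun g hg => hsep ?_)
  simpa [c₃.equivV] using hrel hg

end CollapseOfEdge

end GTree

open GTree in
theorem collapsible_edge_types_general {G : Type} [Group G] (T'' T : GTree G)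
    (e : T''.E) (hce : IsCollapse T'' T e)
    (hred : T.Reduced) :
    (∀ f : T''.E, T''.CollapsibleEdge f → f ∉ T''.geomOrbit e →
      ∃ g : G, T''.aV g (T''.o e) = T''.o f ∨ T''.aV g (T''.o e) = T''.t f) ∧
    (∀ f : T''.E, T''.CollapsibleEdge f → f ∉ T''.geomOrbit e →
      T''.o f = T''.o e →
      T''.TypeOne e f ∨ T''.TypeTwo e f ∨ T''.TypeThree e f) ∧
    (∀ f : T''.E, f ∉ T''.geomOrbit e → T''.TypeTwo e f →
      ∀ T₃ : GTree G, IsCollapse T'' T₃ f → T₃.Reduced) := by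
  refine ⟨fun f hf hfe => hce.exists_sameOrbit_of_collapsibleEdge hred hf hfe,
    fun f hf _ hof => ?_,
    fun f _ hf T₃ hc₃ => hce.reduced_of_isCollapse_typeTwo hred hf hc₃⟩
  by_cases ht : ∃ g : G, T''.aV g (T''.t e) = T''.t f
  · by_cases hl : T''.lab (T''.bar f)
    exacts [Or.inr (Or.inr ⟨hf, hof, ht, hl⟩), Or.inr (Or.inl ⟨hf, hof, ht, hl⟩)]
  · exact Or.inl ⟨hf, hof, not_exists.1 ht⟩

open GTree in
/-- Let `Γ = Γ''_e` be reduced, where `e` is a collapsible edge of `Γ''` with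
label `=`. Then every collapsible edge of `Γ''` other than (the orbit of) `e`
is incident to (the orbit of) `o(e)`; every such edge `f` with `o(f) = o(e)`
is of type 1, 2 or 3; and collapsing a type 2 edge always yields a reduced
tree. -/
theorem collapsible_edge_types {G : Type} [Group G] (T'' T : GTree G)
    (e : T''.E) (hlab : T''.lab e) (hce : IsCollapse T'' T e)
    (hred : T.Reduced) :
    (∀ f : T''.E, T''.CollapsibleEdge f → f ∉ T''.geomOrbit e →
      ∃ g : G, T''.aV g (T''.o e) = T''.o f ∨ T''.aV g (T''.o e) = T''.t f) ∧
    (∀ f : T''.E, T''.CollapsibleEdge f → f ∉ T''.geomOrbit e →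
      T''.o f = T''.o e →
      T''.TypeOne e f ∨ T''.TypeTwo e f ∨ T''.TypeThree e f) ∧
    (∀ f : T''.E, f ∉ T''.geomOrbit e → T''.TypeTwo e f →
      ∀ T₃ : GTree G, IsCollapse T'' T₃ f → T₃.Reduced) :=
  collapsible_edge_types_general T'' T e hce hred
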